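/- arXiv:2412.13101 — 2 statements merged into one kernel-verified Lean document; each statement's English description precedes it below -/
import Mathlib

section
/- Let ν > 0, ε > 0 and T ∈ ℝ, and define m : ℝ → ℝ by m(t) = ν·(1 + (ν·ε − 1)·e^{−ν(T−t)})^{−1}. Then for every t ≤ T the denominator 1 + (νε − 1)e^{−ν(T−t)} is strictly positive, m(T) = 1/ε, and m has derivative at every t ≤ T satisfying the Riccati equation m'(t) = m(t)² − ν·m(t) = m(t)·(m(t) − ν). -/
/-!
The denominator `D(t) = 1 + (νε − 1)e^{−ν(T−t)}` solves the linear equation `D' = ν(D − 1)`,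
and the substitution `m = ν / D` turns this linear equation into the Riccati equation
`m' = m² − νm`. Positivity of `D` for `t ≤ T` holds because `D` is the convex combination
`(1 − x) + νε·x` with weight `x = e^{−ν(T−t)} ∈ (0, 1]`.
-/

open Real

lemma one_add_sub_one_mul_pos {a x : ℝ} (ha : 0 < a) (hx₀ : 0 < x) (hx₁ : x ≤ 1) :
    0 < 1 + (a - 1) * x := by
  nlinarith

lemma hasDerivAt_one_add_mul_exp (c ν T t : ℝ) :
    HasDerivAt (fun s => 1 + c * exp (-ν * (T - s)))
      (ν * ((1 + c * exp (-ν * (T - t))) - 1)) t := by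
  have hlin : HasDerivAt (fun s : ℝ => -ν * (T - s)) ν t := by
    simpa using ((hasDerivAt_id t).const_sub T).const_mul (-ν)
  exact ((hlin.exp.const_mul c).const_add 1).congr_deriv (by ring)

lemma HasDerivAt.div_riccati {D : ℝ → ℝ} {ν t : ℝ} (hD : HasDerivAt D (ν * (D t - 1)) t)
    (hD₀ : D t ≠ 0) :
    HasDerivAt (fun s => ν / D s) ((ν / D t) ^ 2 - ν * (ν / D t)) t :=
  ((hasDerivAt_const t ν).div hD hD₀).congr_deriv (by field_simp; ring)

/-- The finite-horizon Merton consumption fraction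
`m(t) = ν·(1 + (νε − 1)e^{−ν(T−t)})⁻¹` has a strictly positive denominator for
`t ≤ T`, satisfies the terminal condition `m(T) = 1/ε`, and solves the Riccati
equation `m'(t) = m(t)² − ν·m(t) = m(t)(m(t) − ν)` for every `t ≤ T`. -/
theorem stmt7 (ν ε T : ℝ) (hν : 0 < ν) (hε : 0 < ε) :
    let m : ℝ → ℝ := fun t => ν / (1 + (ν * ε - 1) * Real.exp (-ν * (T - t)))
    (∀ t ≤ T, 0 < 1 + (ν * ε - 1) * Real.exp (-ν * (T - t))) ∧
    m T = 1 / ε ∧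
    (∀ t ≤ T, HasDerivAt m (m t ^ 2 - ν * m t) t) := by
  intro m
  have hden : ∀ t ≤ T, 0 < 1 + (ν * ε - 1) * exp (-ν * (T - t)) := fun t ht =>
    one_add_sub_one_mul_pos (mul_pos hν hε) (exp_pos _)
      (exp_le_one_iff.mpr (by nlinarith))
  refine ⟨hden, ?_, fun t ht => ?_⟩
  · show ν / (1 + (ν * ε - 1) * exp (-ν * (T - T))) = 1 / ε
    rw [sub_self, mul_zero, exp_zero, mul_one, add_sub_cancel, div_mul_cancel_left₀ hν.ne',
      one_div]
  · exact (hasDerivAt_one_add_mul_exp _ ν T t).div_riccati (hden t ht).ne'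
end

section
/- Let r, μ, ρ ∈ ℝ, σ > 0, γ > 0 with γ ≠ 1, set ν = (ρ − (1−γ)·(r + (μ−r)²/(2γσ²)))/γ, and assume ν > 0. Define V : (0,∞) → ℝ by V(x) = ν^{−γ}·x^{1−γ}/(1−γ). Then for every x > 0, the function G : ℝ × (0,∞) → ℝ given by G(π, C) = C^{1−γ}/(1−γ) + V'(x)·(r·x + (μ−r)·π·x − C) + (1/2)·σ²·π²·x²·V''(x) attains its global maximum at (π*, C*) = ((μ−r)/(γσ²), ν·x), and the maximum value satisfies G(π*, C*) = ρ·V(x); equivalently, V solves the stationary Hamilton–Jacobi–Bellman equation ρ·V(x) = sup_{(π,C) ∈ ℝ×(0,∞)} G(π, C) for all x > 0. -/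
lemma key_crra (γ : ℝ) (hγ : 0 < γ) (hγ1 : γ ≠ 1) {t : ℝ} (ht : 0 < t) :
    t ^ (1 - γ) / (1 - γ) - t ≤ 1 / (1 - γ) - 1 := by
  rcases lt_or_gt_of_ne hγ1 with h | h
  · have hp : (0:ℝ) < 1 - γ := by linarith
    have hb := rpow_one_add_le_one_add_mul_self (s := t - 1) (by linarith)
      (p := 1 - γ) (by linarith) (by linarith)
    rw [show (1:ℝ) + (t - 1) = t by ring] at hb
    have h2 : t ^ (1 - γ) / (1 - γ) ≤ (1 + (1 - γ) * (t - 1)) / (1 - γ) :=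
      (div_le_div_iff_of_pos_right hp).mpr hb
    have h3 : (1 + (1 - γ) * (t - 1)) / (1 - γ) = 1 / (1 - γ) + (t - 1) := by
      field_simp
    linarith
  · have hp : (1:ℝ) - γ < 0 := by linarith
    have hb : 1 + (1 - γ) * (t - 1) ≤ t ^ (1 - γ) := by
      have h1 : t ^ (1 - γ) = Real.exp (Real.log t * (1 - γ)) := Real.rpow_def_of_pos ht _
      have h2 : Real.log t ≤ t - 1 := Real.log_le_sub_one_of_pos ht
      have h3 : (1 - γ) * (t - 1) ≤ (1 - γ) * Real.log t := by nlinarith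
      have h4 := Real.add_one_le_exp (Real.log t * (1 - γ))
      rw [h1]; linarith
    have h2 : t ^ (1 - γ) / (1 - γ) ≤ (1 + (1 - γ) * (t - 1)) / (1 - γ) :=
      (div_le_div_right_of_neg hp).mpr hb
    have hne : (1:ℝ) - γ ≠ 0 := hp.ne
    have h3 : (1 + (1 - γ) * (t - 1)) / (1 - γ) = 1 / (1 - γ) + (t - 1) := by
      field_simp
    linarith

lemma derivV (ν γ : ℝ) {y : ℝ} (hy : 0 < y) (hγ1 : γ ≠ 1) :
    deriv (fun x : ℝ => ν ^ (-γ) * x ^ (1 - γ) / (1 - γ)) y = ν ^ (-γ) * y ^ (-γ) := by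
  have h := ((Real.hasDerivAt_rpow_const (p := 1 - γ) (Or.inl hy.ne')).const_mul
    (ν ^ (-γ))).div_const (1 - γ)
  rw [h.deriv, show (1 - γ - 1 : ℝ) = -γ by ring]
  have : (1:ℝ) - γ ≠ 0 := sub_ne_zero.mpr (Ne.symm hγ1)
  field_simp

lemma derivV2 (ν γ : ℝ) {x : ℝ} (hx : 0 < x) (hγ1 : γ ≠ 1) :
    deriv (deriv (fun x : ℝ => ν ^ (-γ) * x ^ (1 - γ) / (1 - γ))) x
      = ν ^ (-γ) * (-γ) * x ^ (-γ - 1) := by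
  have hev : deriv (fun x : ℝ => ν ^ (-γ) * x ^ (1 - γ) / (1 - γ)) =ᶠ[nhds x]
      fun y => ν ^ (-γ) * y ^ (-γ) := by
    filter_upwards [eventually_gt_nhds hx] with y hy using derivV ν γ hy hγ1
  rw [hev.deriv_eq]
  have h := (Real.hasDerivAt_rpow_const (p := -γ) (Or.inl hx.ne')).const_mul (ν ^ (-γ))
  rw [h.deriv]; ring

/-- Infinite-horizon Merton problem with CRRA utility: the candidate value
function `V(x) = ν^{−γ}x^{1−γ}/(1−γ)` with
`ν = (ρ − (1−γ)(r + (μ−r)²/(2γσ²)))/γ > 0` solves the stationary HJB equation: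
for every `x > 0`, the Hamiltonian
`G(π,C) = C^{1−γ}/(1−γ) + V'(x)(rx + (μ−r)πx − C) + ½σ²π²x²V''(x)` attains its
global maximum over `ℝ × (0,∞)` at `(π*, C*) = ((μ−r)/(γσ²), νx)`, and the
maximum value satisfies `G(π*,C*) = ρV(x)`. -/
theorem stmt8 (r μ ρ σ γ ν : ℝ) (hσ : 0 < σ) (hγ : 0 < γ) (hγ1 : γ ≠ 1)
    (hνdef : ν = (ρ - (1 - γ) * (r + (μ - r) ^ 2 / (2 * γ * σ ^ 2))) / γ)
    (hν : 0 < ν) :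
    let V : ℝ → ℝ := fun x => ν ^ (-γ) * x ^ (1 - γ) / (1 - γ)
    ∀ x : ℝ, 0 < x →
      let G : ℝ → ℝ → ℝ := fun π C =>
        C ^ (1 - γ) / (1 - γ) + deriv V x * (r * x + (μ - r) * π * x - C)
          + (1 / 2) * σ ^ 2 * π ^ 2 * x ^ 2 * deriv (deriv V) x
      (∀ π C : ℝ, 0 < C → G π C ≤ G ((μ - r) / (γ * σ ^ 2)) (ν * x)) ∧
      G ((μ - r) / (γ * σ ^ 2)) (ν * x) = ρ * V x := by
  intro V x hx G
  have hγ0 : γ ≠ 0 := hγ.ne'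
  have hσ0 : σ ≠ 0 := hσ.ne'
  have h1γ : (1:ℝ) - γ ≠ 0 := sub_ne_zero.mpr (Ne.symm hγ1)
  have hνx : 0 < ν * x := mul_pos hν hx
  have hk : 0 < ν ^ (-γ) := Real.rpow_pos_of_pos hν _
  have hXm : 0 < x ^ (-γ - 1) := Real.rpow_pos_of_pos hx _
  have hd1 : deriv V x = ν ^ (-γ) * x ^ (-γ) := derivV ν γ hx hγ1
  have hd2 : deriv (deriv V) x = ν ^ (-γ) * (-γ) * x ^ (-γ - 1) := derivV2 ν γ hx hγ1
  have hX0 : x ^ (-γ) = x * x ^ (-γ - 1) := by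
    rw [show x ^ (-γ) = x ^ (1 + (-γ - 1)) from by norm_num,
      Real.rpow_add hx, Real.rpow_one]
  constructor
  · intro π C hC
    simp only [G, hd1, hd2]
    have hA : C ^ (1 - γ) / (1 - γ) - ν ^ (-γ) * x ^ (-γ) * C
        ≤ (ν * x) ^ (1 - γ) / (1 - γ) - ν ^ (-γ) * x ^ (-γ) * (ν * x) := by
      set t := C / (ν * x) with ht_def
      have ht : 0 < t := div_pos hC hνx
      have hCt : C = t * (ν * x) := by rw [ht_def]; field_simp
      have h1 : C ^ (1 - γ) = t ^ (1 - γ) * (ν * x) ^ (1 - γ) := by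
        rw [hCt, Real.mul_rpow ht.le hνx.le]
      have h2 : ν ^ (-γ) * x ^ (-γ) = (ν * x) ^ (-γ) :=
        (Real.mul_rpow hν.le hx.le).symm
      have h3 : (ν * x) ^ (-γ) * (ν * x) = (ν * x) ^ (1 - γ) := by
        rw [show (1 - γ:ℝ) = -γ + 1 by ring, Real.rpow_add hνx, Real.rpow_one]
      have hP : 0 < (ν * x) ^ (1 - γ) := Real.rpow_pos_of_pos hνx _
      have hkey := key_crra γ hγ hγ1 ht
      have h4 : (ν * x) ^ (-γ) * (t * (ν * x)) = t * (ν * x) ^ (1 - γ) := by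
        rw [← h3]; ring
      clear_value t
      rw [h1, h2, hCt, h4, h3]
      have hm := mul_le_mul_of_nonneg_right hkey hP.le
      ring_nf at hm ⊢
      linarith
    have hB : ν ^ (-γ) * x ^ (-γ) * ((μ - r) * π * x)
          + 1 / 2 * σ ^ 2 * π ^ 2 * x ^ 2 * (ν ^ (-γ) * (-γ) * x ^ (-γ - 1))
        ≤ ν ^ (-γ) * x ^ (-γ) * ((μ - r) * ((μ - r) / (γ * σ ^ 2)) * x)
          + 1 / 2 * σ ^ 2 * ((μ - r) / (γ * σ ^ 2)) ^ 2 * x ^ 2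
            * (ν ^ (-γ) * (-γ) * x ^ (-γ - 1)) := by
      rw [hX0]
      set P := (μ - r) / (γ * σ ^ 2) with hPdef
      have hπs : μ - r = γ * σ ^ 2 * P := by rw [hPdef]; field_simp
      rw [hπs]
      have hc : 0 ≤ γ / 2 * σ ^ 2 * (ν ^ (-γ) * x ^ (-γ - 1) * x ^ 2) := by positivity
      nlinarith [mul_nonneg hc (sq_nonneg (π - P))]
    linarith
  · simp only [G, V, hd1, hd2]
    have h1 : (ν * x) ^ (1 - γ) = ν ^ (1 - γ) * x ^ (1 - γ) :=
      Real.mul_rpow hν.le hx.le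
    have h2 : ν ^ (1 - γ) = ν * ν ^ (-γ) := by
      rw [show (1 - γ:ℝ) = 1 + (-γ) by ring, Real.rpow_add hν, Real.rpow_one]
    have h3 : x ^ (1 - γ) = x * x ^ (-γ) := by
      rw [show (1 - γ:ℝ) = 1 + (-γ) by ring, Real.rpow_add hx, Real.rpow_one]
    have hρ : ρ = γ * ν + (1 - γ) * (r + (μ - r) ^ 2 / (2 * γ * σ ^ 2)) := by
      rw [hνdef]; field_simp; ring
    rw [h1, h2, h3, hX0, hρ]
    field_simp
    ring
end
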